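/- Let q ≥ 4 be even and h = (q−2)/2. Then the Möbius transformation (S·T)^h maps λ/2 to −λ³/(λ² + 4). Consequently, for ξ ∈ (−λ/2, 1−λ) whose regular λ-fraction has the form [0; 1^{h−1}, a_h, …], one has a_h = 1 precisely when ξ < −λ³/(λ²+4). -/

import Mathlib

open Matrix Real

/-- The Möbius action of a real 2×2 matrix on ℝ. -/
noncomputable def moeb (A : Matrix (Fin 2) (Fin 2) ℝ) (x : ℝ) : ℝ :=
  (A 0 0 * x + A 0 1) / (A 1 0 * x + A 1 1)

/-!
With θ = π/q we have S·T = [[0, -1], [1, 2 cos θ]], whose characteristic roots are e^{±iθ};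
hence sin θ · (S·T)^n = [[-sin (n-1)θ, -sin nθ], [sin nθ, sin (n+1)θ]]. Since scalars act
trivially, and (h+1)θ = π/2 for h = (q-2)/2, the entries of (S·T)^h are, up to scaling,
-cos 2θ, -cos θ, cos θ and 1, and evaluating at λ/2 = cos θ is a direct computation.
-/

theorem moeb_smul (A : Matrix (Fin 2) (Fin 2) ℝ) (x : ℝ) {c : ℝ} (hc : c ≠ 0) :
    moeb (c • A) x = moeb A x := by
  simp only [moeb, Matrix.smul_apply, smul_eq_mul, mul_assoc, ← mul_add]
  exact mul_div_mul_left _ _ hc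

theorem sin_smul_pow (θ : ℝ) (n : ℕ) :
    sin θ • !![0, -1; 1, 2 * cos θ] ^ n =
      !![-sin ((n - 1) * θ), -sin (n * θ); sin (n * θ), sin ((n + 1) * θ)] := by
  induction n with
  | zero => ext i j; fin_cases i <;> fin_cases j <;> simp
  | succ n ih =>
    have recurrence (m : ℝ) : sin ((m + 1) * θ) + sin ((m - 1) * θ) = 2 * sin (m * θ) * cos θ := by
      rw [add_mul, sub_mul, one_mul, sin_add, sin_sub]; ring
    rw [pow_succ, ← smul_mul, ih, mul_fin_two]
    push_cast
    ext i j
    fin_cases i <;> fin_cases j <;>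
      simp only [Fin.zero_eta, Fin.mk_one, of_apply, cons_val', cons_val_zero, cons_val_one,
        cons_val_fin_one, add_sub_cancel_right]
    · ring
    · linear_combination recurrence n
    · ring
    · linear_combination (norm := ring_nf) -recurrence (n + 1)

theorem moeb_pow_cos_of_succ_mul_eq_pi_div_two {θ : ℝ} {n : ℕ} (hθ : sin θ ≠ 0)
    (hn : (n + 1) * θ = π / 2) :
    moeb (!![0, -1; 1, 2 * cos θ] ^ n) (cos θ) = -2 * cos θ ^ 3 / (cos θ ^ 2 + 1) := by
  have h₀ : sin ((n - 1) * θ) = cos (2 * θ) := by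
    rw [← sin_pi_div_two_sub, ← hn]; ring_nf
  have h₁ : sin (n * θ) = cos θ := by
    rw [← sin_pi_div_two_sub, ← hn]; ring_nf
  rw [← moeb_smul _ _ hθ, sin_smul_pow, hn, h₀, h₁, sin_pi_div_two, cos_two_mul]
  simp only [moeb, of_apply, cons_val', cons_val_zero, cons_val_one, empty_val', cons_val_fin_one]
  congr 1 <;> ring

/-- Let q ≥ 4 be even and h = (q−2)/2. Then the Möbius transformation
(S·T)^h maps λ/2 to −λ³/(λ²+4). -/
theorem ST_h_maps_half_lambda (q : ℕ) (hq : 4 ≤ q) (hqe : Even q)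
    (lam : ℝ) (hlam : lam = 2 * Real.cos (Real.pi / q))
    (S T : Matrix (Fin 2) (Fin 2) ℝ)
    (hS : S = !![0, -1; 1, 0]) (hT : T = !![1, lam; 0, 1])
    (h : ℕ) (hh : h = (q - 2) / 2) :
    moeb ((S * T) ^ h) (lam / 2) = -lam ^ 3 / (lam ^ 2 + 4) := by
  set θ := π / q
  have hST : S * T = !![0, -1; 1, 2 * cos θ] := by
    rw [hS, hT, mul_fin_two, hlam]; simp
  have hq' : (4 : ℝ) ≤ q := by exact_mod_cast hq
  have hsin : sin θ ≠ 0 := by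
    refine (sin_pos_of_pos_of_lt_pi (by positivity) ?_).ne'
    rw [div_lt_iff₀ (by positivity)]
    nlinarith [pi_pos]
  have hangle : (h + 1) * θ = π / 2 := by
    have hq2 : (q : ℝ) = 2 * (h + 1) := by
      norm_cast; obtain ⟨r, rfl⟩ := hqe; omega
    simp only [θ, hq2]; field_simp
  rw [hST, hlam, mul_div_cancel_left₀ _ two_ne_zero,
    moeb_pow_cos_of_succ_mul_eq_pi_div_two hsin hangle]
  field_simp
  ring
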